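/- arXiv:1007.1445 — 2 statements merged into one kernel-verified Lean document; each statement's English description precedes it below -/
import Mathlib

section
/- For any Hermitian matrix ρ with trace 1, the trace norm of ρ equals the infimum of 2t+1 over all decompositions ρ = (1+t)σ⁺ − tσ⁻ where t ≥ 0 and σ⁺, σ⁻ are positive semidefinite matrices with trace 1. -/
open scoped Matrix BigOperators ComplexOrder

/-- The trace norm `‖M‖₁ = tr √(Mᴴ M)`. -/
noncomputable def traceNorm {n : Type*} [Fintype n] [DecidableEq n] (M : Matrix n n ℂ) : ℝ :=
  ((Matrix.posSemidef_conjTranspose_mul_self M).1.eigenvectorUnitary.1 *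
    Matrix.diagonal (((↑) : ℝ → ℂ) ∘ Real.sqrt ∘ (Matrix.posSemidef_conjTranspose_mul_self M).1.eigenvalues) *
    (star (Matrix.posSemidef_conjTranspose_mul_self M).1.eigenvectorUnitary : Matrix n n ℂ)).trace.re

section TraceNormAux

open Matrix MatrixOrder

variable {n : Type*} [Fintype n] [DecidableEq n]


lemma tn_trace_re_nonneg {M : Matrix n n ℂ} (hM : M.PosSemidef) : 0 ≤ M.trace.re := by
  have h : ∀ i, 0 ≤ (M i i).re := by
    intro i
    have : (0:ℂ) ≤ M i i := hM.diag_nonneg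
    exact (Complex.le_def.mp this).1
  rw [Matrix.trace, Complex.re_sum]
  exact Finset.sum_nonneg fun i _ => h i

lemma tn_trace_mul_re_nonneg {A B : Matrix n n ℂ} (hA : A.PosSemidef) (hB : B.PosSemidef) :
    0 ≤ (A * B).trace.re := by
  set S := CFC.sqrt A with hSdef
  have hS : S.PosSemidef := nonneg_iff_posSemidef.mp (CFC.sqrt_nonneg A)
  have hSS : S * S = A := CFC.sqrt_mul_sqrt_self A (nonneg_iff_posSemidef.mpr hA)
  have hpsd : (Sᴴ * B * S).PosSemidef := hB.conjTranspose_mul_mul_same S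
  have : (A * B).trace = (Sᴴ * B * S).trace := by
    rw [Matrix.trace_mul_cycle, hS.1, hSS]
  rw [this]
  exact tn_trace_re_nonneg hpsd

section M
variable {ρ : Matrix n n ℂ} (hH : ρ.IsHermitian)

noncomputable def tnM (f : n → ℝ) : Matrix n n ℂ :=
  (hH.eigenvectorUnitary : Matrix n n ℂ) * diagonal (fun i => (f i : ℂ)) * star (hH.eigenvectorUnitary : Matrix n n ℂ)

lemma tnU_mul_star : (hH.eigenvectorUnitary : Matrix n n ℂ) * star (hH.eigenvectorUnitary : Matrix n n ℂ) = 1 :=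
  Matrix.mem_unitaryGroup_iff.mp (hH.eigenvectorUnitary).2

lemma tnU_star_mul : star (hH.eigenvectorUnitary : Matrix n n ℂ) * (hH.eigenvectorUnitary : Matrix n n ℂ) = 1 :=
  Matrix.mem_unitaryGroup_iff'.mp (hH.eigenvectorUnitary).2

lemma tnM_spec : ρ = tnM hH hH.eigenvalues := by
  have h := hH.spectral_theorem
  have : diagonal (RCLike.ofReal ∘ hH.eigenvalues) =
      diagonal (fun i => ((hH.eigenvalues i : ℝ) : ℂ)) := rfl
  rw [this] at h
  exact h

lemma tnM_trace (f : n → ℝ) : (tnM hH f).trace = ((∑ i, f i : ℝ) : ℂ) := by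
  rw [tnM, Matrix.trace_mul_cycle, tnU_star_mul, one_mul, Matrix.trace_diagonal]
  push_cast; ring

lemma tnM_mul (f g : n → ℝ) : tnM hH f * tnM hH g = tnM hH (f * g) := by
  have key : ∀ X : Matrix n n ℂ, star (hH.eigenvectorUnitary : Matrix n n ℂ) *
      ((hH.eigenvectorUnitary : Matrix n n ℂ) * X) = X := by
    intro X; rw [← Matrix.mul_assoc, tnU_star_mul, one_mul]
  simp only [tnM, Matrix.mul_assoc]
  rw [key, ← Matrix.mul_assoc (diagonal _) (diagonal _), diagonal_mul_diagonal]
  have : (fun i => ((f i : ℂ)) * ((g i : ℂ))) = fun i => (((f * g) i : ℝ) : ℂ) := by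
    funext i; push_cast [Pi.mul_apply]; ring
  rw [this]

lemma tnM_add (f g : n → ℝ) : tnM hH f + tnM hH g = tnM hH (f + g) := by
  simp only [tnM]
  rw [← Matrix.add_mul, ← Matrix.mul_add, Matrix.diagonal_add]
  have : (fun i => ((f i : ℂ)) + ((g i : ℂ))) = fun i => (((f + g) i : ℝ) : ℂ) := by
    funext i; push_cast [Pi.add_apply]; ring
  rw [this]

lemma tnM_sub (f g : n → ℝ) : tnM hH f - tnM hH g = tnM hH (f - g) := by
  simp only [tnM]
  rw [← Matrix.sub_mul, ← Matrix.mul_sub, Matrix.diagonal_sub]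
  have : (fun i => ((f i : ℂ)) - ((g i : ℂ))) = fun i => (((f - g) i : ℝ) : ℂ) := by
    funext i; push_cast [Pi.sub_apply]; ring
  rw [this]

lemma tnM_smul (c : ℝ) (f : n → ℝ) : ((c : ℂ)) • tnM hH f = tnM hH (c • f) := by
  simp only [tnM]
  rw [← Matrix.smul_mul, ← Matrix.mul_smul, ← Matrix.diagonal_smul]
  have : ((c : ℂ) • fun i => ((f i : ℂ))) = fun i => (((c • f) i : ℝ) : ℂ) := by
    funext i; push_cast [Pi.smul_apply, smul_eq_mul]; ring
  rw [this]

lemma tnM_pos {f : n → ℝ} (hf : 0 ≤ f) : (tnM hH f).PosSemidef := by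
  have hd : (diagonal (fun i => (f i : ℂ))).PosSemidef := by
    refine PosSemidef.diagonal fun i => ?_
    show (0:ℂ) ≤ (f i : ℂ)
    exact_mod_cast hf i
  have := hd.mul_mul_conjTranspose_same (hH.eigenvectorUnitary : Matrix n n ℂ)
  simpa [Matrix.star_eq_conjTranspose, Matrix.mul_assoc, tnM] using this

lemma tnM_one : tnM hH 1 = 1 := by
  have h1 : (fun i : n => (((1:n→ℝ) i : ℝ) : ℂ)) = fun _ => (1:ℂ) := by funext i; simp
  rw [tnM, h1, diagonal_one, mul_one, tnU_mul_star]

end M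


end TraceNormAux

open Matrix MatrixOrder in
theorem trace_norm_eq_inf_over_density_decompositions
    {n : Type*} [Fintype n] [DecidableEq n] (ρ : Matrix n n ℂ)
    (hH : ρ.IsHermitian) (htr : ρ.trace = 1) :
    traceNorm ρ = sInf {x : ℝ | ∃ (t : ℝ) (σp σm : Matrix n n ℂ),
      0 ≤ t ∧ σp.PosSemidef ∧ σm.PosSemidef ∧ σp.trace = 1 ∧ σm.trace = 1 ∧
      ρ = ((1 + t : ℝ) : ℂ) • σp - ((t : ℝ) : ℂ) • σm ∧ x = 2 * t + 1} := by
  classical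
  set S := {x : ℝ | ∃ (t : ℝ) (σp σm : Matrix n n ℂ),
      0 ≤ t ∧ σp.PosSemidef ∧ σm.PosSemidef ∧ σp.trace = 1 ∧ σm.trace = 1 ∧
      ρ = ((1 + t : ℝ) : ℂ) • σp - ((t : ℝ) : ℂ) • σm ∧ x = 2 * t + 1} with hS
  set lam : n → ℝ := hH.eigenvalues with hlam
  set lp : n → ℝ := fun i => max (lam i) 0 with hlpdef
  set lm : n → ℝ := fun i => max (-(lam i)) 0 with hlmdef
  have hlp : (0:n→ℝ) ≤ lp := fun i => le_max_right _ _
  have hlm : (0:n→ℝ) ≤ lm := fun i => le_max_right _ _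
  have habs : ∀ i, |lam i| = lp i + lm i := by
    intro i
    rcases le_total 0 (lam i) with h | h
    · simp [hlpdef, hlmdef, abs_of_nonneg h, max_eq_left h, max_eq_right (neg_nonpos.mpr h)]
    · simp [hlpdef, hlmdef, abs_of_nonpos h, max_eq_right h, max_eq_left (neg_nonneg.mpr h)]
  have hdiff : ∀ i, lam i = lp i - lm i := by
    intro i
    rcases le_total 0 (lam i) with h | h
    · simp [hlpdef, hlmdef, max_eq_left h, max_eq_right (neg_nonpos.mpr h)]
    · simp [hlpdef, hlmdef, max_eq_right h, max_eq_left (neg_nonneg.mpr h)]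
  -- trace norm computation
  have habsnn : (0:n→ℝ) ≤ fun i => |lam i| := fun i => abs_nonneg _
  have hspec : ρ = tnM hH lam := by rw [hlam]; exact tnM_spec hH
  have hsq : ρᴴ * ρ = (tnM hH (fun i => |lam i|)) ^ 2 := by
    have h1 : (fun i => |lam i|) * (fun i => |lam i|) = lam * lam := by
      funext i; simp [Pi.mul_apply, abs_mul_abs_self]
    have h2 := congrArg (fun A => A * A) hspec
    rw [pow_two, tnM_mul, h1, ← tnM_mul, hH.eq, h2]
  have hsqrt : tnM (Matrix.posSemidef_conjTranspose_mul_self ρ).1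
      (Real.sqrt ∘ (Matrix.posSemidef_conjTranspose_mul_self ρ).1.eigenvalues) =
      tnM hH (fun i => |lam i|) := by
    rw [← CFC.sqrt_unique (a := ρᴴ * ρ) (b := tnM hH (fun i => |lam i|)) (by rw [← pow_two, hsq])
      (nonneg_iff_posSemidef.mpr (tnM_pos hH habsnn))]
    refine (CFC.sqrt_unique (a := ρᴴ * ρ) (b := tnM (Matrix.posSemidef_conjTranspose_mul_self ρ).1
      (Real.sqrt ∘ (Matrix.posSemidef_conjTranspose_mul_self ρ).1.eigenvalues)) ?_
      (nonneg_iff_posSemidef.mpr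
      (tnM_pos (Matrix.posSemidef_conjTranspose_mul_self ρ).1
        (fun i => Real.sqrt_nonneg _)))).symm
    rw [tnM_mul]
    refine Eq.trans ?_ (tnM_spec (Matrix.posSemidef_conjTranspose_mul_self ρ).1).symm
    congr 1
    funext i
    simp only [Pi.mul_apply, Function.comp]
    exact Real.mul_self_sqrt (Matrix.eigenvalues_conjTranspose_mul_self_nonneg ρ i)
  have htn : traceNorm ρ = ∑ i, |lam i| := by
    rw [show traceNorm ρ = (tnM (Matrix.posSemidef_conjTranspose_mul_self ρ).1
      (Real.sqrt ∘ (Matrix.posSemidef_conjTranspose_mul_self ρ).1.eigenvalues)).trace.re from rfl,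
      hsqrt, tnM_trace]
    simp
  -- eigenvalue sums
  have hsum : ∑ i, lam i = 1 := by
    have h := tnM_trace hH lam
    rw [← tnM_spec hH, htr] at h
    exact_mod_cast h.symm
  set t0 := ∑ i, lm i with ht0def
  have ht0nn : 0 ≤ t0 := Finset.sum_nonneg fun i _ => hlm i
  have hps : ∑ i, lp i - ∑ i, lm i = 1 := by
    rw [← Finset.sum_sub_distrib]
    calc ∑ i, (lp i - lm i) = ∑ i, lam i := by
          refine Finset.sum_congr rfl fun i _ => (hdiff i).symm
      _ = 1 := hsum
  have hsplit : ∑ i, |lam i| = 2 * t0 + 1 := by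
    have h2 : ∑ i, |lam i| = ∑ i, lp i + ∑ i, lm i := by
      rw [← Finset.sum_add_distrib]
      exact Finset.sum_congr rfl fun i _ => habs i
    rw [← ht0def] at hps
    linarith
  -- bound on trace against contractions
  have bound : ∀ (g : n → ℝ), (∀ i, |g i| ≤ 1) → ∀ (σ : Matrix n n ℂ), σ.PosSemidef →
      σ.trace = 1 → |(tnM hH g * σ).trace.re| ≤ 1 := by
    intro g hg σ hσ hσtr
    have h1 : (tnM hH ((1:n→ℝ) - g)).PosSemidef :=
      tnM_pos hH (fun i => by have := (abs_le.mp (hg i)).2; simp [Pi.sub_apply]; linarith)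
    have h2 : (tnM hH ((1:n→ℝ) + g)).PosSemidef :=
      tnM_pos hH (fun i => by have := (abs_le.mp (hg i)).1; simp [Pi.add_apply]; linarith)
    have e1 : tnM hH ((1:n→ℝ) - g) = 1 - tnM hH g := by rw [← tnM_sub, tnM_one]
    have e2 : tnM hH ((1:n→ℝ) + g) = 1 + tnM hH g := by rw [← tnM_add, tnM_one]
    have q1 := tn_trace_mul_re_nonneg h1 hσ
    have q2 := tn_trace_mul_re_nonneg h2 hσ
    rw [e1, Matrix.sub_mul, one_mul, Matrix.trace_sub, Complex.sub_re, hσtr] at q1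
    rw [e2, Matrix.add_mul, one_mul, Matrix.trace_add, Complex.add_re, hσtr] at q2
    simp only [Complex.one_re] at q1 q2
    rw [abs_le]
    constructor <;> linarith
  -- lower bound for all elements of S
  have hlb : ∀ x ∈ S, 2 * t0 + 1 ≤ x := by
    rintro x ⟨t, σp, σm, ht, hp, hm, htp, htm, hdec, rfl⟩
    set g : n → ℝ := fun i => if 0 ≤ lam i then 1 else -1 with hgdef
    have hg1 : ∀ i, |g i| ≤ 1 := by
      intro i; simp only [hgdef]; split <;> simp
    have hglam : ∀ i, g i * lam i = |lam i| := by
      intro i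
      simp only [hgdef]
      split
      · rw [abs_of_nonneg ‹_›]; ring
      · rw [abs_of_nonpos (le_of_not_ge ‹_›)]; ring
    have hEρ : (tnM hH g * ρ).trace = ((∑ i, |lam i| : ℝ) : ℂ) := by
      have h2 := congrArg (fun A => (tnM hH g * A).trace) hspec
      rw [h2, tnM_mul, tnM_trace]
      norm_cast
      exact Finset.sum_congr rfl fun i _ => hglam i
    have hdec2 : tnM hH g * ρ =
        ((1 + t : ℝ) : ℂ) • (tnM hH g * σp) - ((t : ℝ) : ℂ) • (tnM hH g * σm) := by
      have h2 := congrArg (fun A => tnM hH g * A) hdec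
      rw [h2, Matrix.mul_sub, Matrix.mul_smul, Matrix.mul_smul]
    have htrre : ∑ i, |lam i| =
        (1 + t) * (tnM hH g * σp).trace.re - t * (tnM hH g * σm).trace.re := by
      have := congrArg (fun z : ℂ => z.re) (hEρ.symm.trans (congrArg Matrix.trace hdec2))
      simpa [Matrix.trace_sub, Matrix.trace_smul, Complex.sub_re, Complex.ofReal_re,
        smul_eq_mul, Complex.mul_re, Complex.ofReal_im] using this
    have b1 := bound g hg1 σp hp htp
    have b2 := bound g hg1 σm hm htm
    rw [abs_le] at b1 b2
    rw [← hsplit]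
    nlinarith [b1.1, b1.2, b2.1, b2.2, ht]
  -- membership
  have hmem : 2 * t0 + 1 ∈ S := by
    rcases eq_or_lt_of_le ht0nn with h0 | h0
    · -- t0 = 0 : ρ itself is PSD
      have hlmz : ∀ i, lm i = 0 := by
        intro i
        have := (Finset.sum_eq_zero_iff_of_nonneg (fun i _ => hlm i)).mp h0.symm
        exact this i (Finset.mem_univ i)
      have hlamnn : (0:n→ℝ) ≤ lam := by
        intro i
        have h := hlmz i
        show (0:ℝ) ≤ lam i
        by_contra hc
        push_neg at hc
        have h2 : lm i = -(lam i) := max_eq_left (by linarith)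
        have h3 : -(lam i) = 0 := h2.symm.trans h
        linarith
      have hρpsd : ρ.PosSemidef := by
        rw [tnM_spec hH]; exact tnM_pos hH hlamnn
      refine ⟨0, ρ, ρ, le_refl 0, hρpsd, hρpsd, htr, htr, ?_, by rw [← h0]⟩
      push_cast
      simp
    · -- t0 > 0
      have hs : (0:ℝ) < 1 + t0 := by linarith
      have hsumlp : ∑ i, lp i = 1 + t0 := by rw [← ht0def] at hps; linarith
      refine ⟨t0, tnM hH ((1 + t0)⁻¹ • lp), tnM hH (t0⁻¹ • lm), ht0nn,
        tnM_pos hH (fun i => mul_nonneg (inv_nonneg.mpr hs.le) (hlp i)),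
        tnM_pos hH (fun i => mul_nonneg (inv_nonneg.mpr h0.le) (hlm i)), ?_, ?_, ?_, rfl⟩
      · rw [tnM_trace]
        have he : ∑ i, ((1 + t0)⁻¹ • lp) i = 1 := by
          simp only [Pi.smul_apply, smul_eq_mul]
          rw [← Finset.mul_sum, hsumlp, inv_mul_cancel₀ hs.ne']
        rw [he]; norm_num
      · rw [tnM_trace]
        have he : ∑ i, (t0⁻¹ • lm) i = 1 := by
          simp only [Pi.smul_apply, smul_eq_mul]
          rw [← Finset.mul_sum, ← ht0def, inv_mul_cancel₀ h0.ne']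
        rw [he]; norm_num
      · have hfun : lp - lm = lam := by
          funext i; exact (hdiff i).symm
        rw [tnM_smul, tnM_smul, smul_smul, smul_smul, mul_inv_cancel₀ hs.ne',
          mul_inv_cancel₀ h0.ne', one_smul, one_smul, tnM_sub, hfun]
        exact hspec
  rw [htn, hsplit]
  exact le_antisymm (le_csInf ⟨_, hmem⟩ hlb) (csInf_le ⟨_, hlb⟩ hmem)
end

section
/- Let M be a compact convex set of Hermitian trace-1 matrices, E_M the decomposition-based monotone, and E_{LM}(ρ) = log₂(1 + 2E_M(ρ)). For any linear trace-preserving Hermiticity-preserving map Λ with Λ(M's elements decomposable over M), and any Hermitian trace-1 ρ with optimal decomposition ρ = (1+t)σ⁺ − tσ⁻ (σ± ∈ M), one has E_{LM}(Λ(ρ)) − E_{LM}(ρ) ≤ max{ E_{LM}(Λ(σ⁺)), E_{LM}(Λ(σ⁻)) }. -/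
open scoped Matrix BigOperators ComplexOrder

/-- The set of `t ≥ 0` so that `ρ = (1+t)σ⁺ - tσ⁻` with `σ± ∈ M`. -/
def decompSet {n : Type*} [Fintype n] (M : Set (Matrix n n ℂ)) (ρ : Matrix n n ℂ) : Set ℝ :=
  {t : ℝ | 0 ≤ t ∧ ∃ σp ∈ M, ∃ σm ∈ M, ρ = ((1 + t : ℝ) : ℂ) • σp - ((t : ℝ) : ℂ) • σm}

/-- The decomposition-based (Vidal–Werner) monotone associated to a set `M`. -/
noncomputable def Edecomp {n : Type*} [Fintype n] (M : Set (Matrix n n ℂ))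
    (ρ : Matrix n n ℂ) : ℝ :=
  sInf (decompSet M ρ)

/-- The logarithmic version `E_{LM}(ρ) = log₂(1 + 2 E_M(ρ))`. -/
noncomputable def ELM {n : Type*} [Fintype n] (M : Set (Matrix n n ℂ))
    (ρ : Matrix n n ℂ) : ℝ :=
  Real.logb 2 (1 + 2 * Edecomp M ρ)

lemma decompSet_bddBelow {n : Type*} [Fintype n] (M : Set (Matrix n n ℂ)) (ρ : Matrix n n ℂ) :
    BddBelow (decompSet M ρ) := ⟨0, fun _ hx => hx.1⟩

set_option maxHeartbeats 1000000 in
/-- Key combination lemma: if `X = (1+t)Y - tZ` and `a ∈ decompSet M Y`, `b ∈ decompSet M Z`,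
then `(1+t)*a + t*(1+b) ∈ decompSet M X`. -/
lemma comb_mem_decompSet {n : Type*} [Fintype n] (M : Set (Matrix n n ℂ))
    (hconv : Convex ℝ M) (X Y Z : Matrix n n ℂ) (t a b : ℝ) (ht : 0 ≤ t)
    (ha : a ∈ decompSet M Y) (hb : b ∈ decompSet M Z)
    (hX : X = ((1 + t : ℝ) : ℂ) • Y - ((t : ℝ) : ℂ) • Z) :
    (1 + t) * a + t * (1 + b) ∈ decompSet M X := by
  obtain ⟨ha0, τp, hτp, τm, hτm, hY⟩ := ha
  obtain ⟨hb0, ωp, hωp, ωm, hωm, hZ⟩ := hb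
  set T : ℝ := (1 + t) * a + t * (1 + b) with hT
  have hT0 : 0 ≤ T := by positivity
  have hP : (0:ℝ) < 1 + T := by linarith
  -- the positive part
  have hwp1 : (0:ℝ) ≤ (1 + t) * (1 + a) / (1 + T) := by positivity
  have hwp2 : (0:ℝ) ≤ t * b / (1 + T) := by positivity
  have hwpsum : (1 + t) * (1 + a) / (1 + T) + t * b / (1 + T) = 1 := by
    field_simp
    ring
  have hσpos : ((1 + t) * (1 + a) / (1 + T)) • τp + (t * b / (1 + T)) • ωm ∈ M :=
    hconv hτp hωm hwp1 hwp2 hwpsum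
  rcases eq_or_lt_of_le hT0 with hTz | hTpos
  · -- T = 0 : then t*(1+b) = 0 so t = 0, and (1+t)*a = 0 so a = 0
    have hx : (0:ℝ) ≤ (1 + t) * a := by positivity
    have hy : (0:ℝ) ≤ t * (1 + b) := by positivity
    have h1 : (1 + t) * a = 0 := by linarith
    have h2 : t * (1 + b) = 0 := by linarith
    have hazero : a = 0 := by
      rcases mul_eq_zero.1 h1 with h | h
      · linarith
      · exact h
    have htzero : t = 0 := by
      rcases mul_eq_zero.1 h2 with h | h
      · exact h
      · linarith
    refine ⟨hT0, τp, hτp, τm, hτm, ?_⟩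
    rw [hX, hY, hZ]
    rw [← hTz]
    subst hazero htzero
    push_cast
    match_scalars <;> ring
  · -- T > 0
    have hwm1 : (0:ℝ) ≤ (1 + t) * a / T := by positivity
    have hwm2 : (0:ℝ) ≤ t * (1 + b) / T := by positivity
    have hwmsum : (1 + t) * a / T + t * (1 + b) / T = 1 := by
      rw [← add_div, div_eq_one_iff_eq (ne_of_gt hTpos)]
    have hσneg : ((1 + t) * a / T) • τm + (t * (1 + b) / T) • ωp ∈ M :=
      hconv hτm hωp hwm1 hwm2 hwmsum
    refine ⟨hT0, _, hσpos, _, hσneg, ?_⟩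
    rw [hX, hY, hZ]
    have hP' : (1 : ℂ) + (T : ℂ) ≠ 0 := by
      have : ((1 + T : ℝ) : ℂ) ≠ 0 := by exact_mod_cast ne_of_gt hP
      push_cast at this ⊢; exact this
    have hT' : (T : ℂ) ≠ 0 := by exact_mod_cast ne_of_gt hTpos
    push_cast
    match_scalars <;> (simp only [Complex.coe_algebraMap] at *; field_simp; try ring)

theorem log_monotone_increase_le_max_over_optimal_decomposition
    {n : Type*} [Fintype n] [DecidableEq n]
    (M : Set (Matrix n n ℂ))
    (hcomp : IsCompact M) (hconv : Convex ℝ M)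
    (hherm : ∀ σ ∈ M, σ.IsHermitian) (htr : ∀ σ ∈ M, σ.trace = 1)
    (Λ : Matrix n n ℂ →ₗ[ℂ] Matrix n n ℂ)
    (hTP : ∀ ρ, (Λ ρ).trace = ρ.trace)
    (hHerm : ∀ ρ : Matrix n n ℂ, ρ.IsHermitian → (Λ ρ).IsHermitian)
    (hdec : ∀ σ ∈ M, (decompSet M (Λ σ)).Nonempty)
    (ρ : Matrix n n ℂ) (hρH : ρ.IsHermitian) (hρtr : ρ.trace = 1)
    (t : ℝ) (σp σm : Matrix n n ℂ) (hσp : σp ∈ M) (hσm : σm ∈ M) (ht : 0 ≤ t)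
    (hdecomp : ρ = ((1 + t : ℝ) : ℂ) • σp - ((t : ℝ) : ℂ) • σm)
    (hopt : Edecomp M ρ = t) :
    ELM M (Λ ρ) - ELM M ρ ≤ max (ELM M (Λ σp)) (ELM M (Λ σm)) := by
  have hA : (decompSet M (Λ σp)).Nonempty := hdec σp hσp
  have hB : (decompSet M (Λ σm)).Nonempty := hdec σm hσm
  set A := decompSet M (Λ σp) with hAdef
  set B := decompSet M (Λ σm) with hBdef
  set sA := sInf A with hsAdef
  set sB := sInf B with hsBdef
  have hsA0 : 0 ≤ sA := le_csInf hA (fun x hx => hx.1)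
  have hsB0 : 0 ≤ sB := le_csInf hB (fun x hx => hx.1)
  have hΛρ : Λ ρ = ((1 + t : ℝ) : ℂ) • Λ σp - ((t : ℝ) : ℂ) • Λ σm := by
    rw [hdecomp, map_sub, map_smul, map_smul]
  -- key estimate for each a ∈ A, b ∈ B
  have hstep : ∀ a ∈ A, ∀ b ∈ B, Edecomp M (Λ ρ) ≤ (1 + t) * a + t * (1 + b) := by
    intro a haA b hbB
    exact csInf_le (decompSet_bddBelow M (Λ ρ))
      (comb_mem_decompSet M hconv (Λ ρ) (Λ σp) (Λ σm) t a b ht haA hbB hΛρ)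
  set E := Edecomp M (Λ ρ) with hEdef
  have hEnonempty : (decompSet M (Λ ρ)).Nonempty := by
    obtain ⟨a, haA⟩ := hA
    obtain ⟨b, hbB⟩ := hB
    exact ⟨_, comb_mem_decompSet M hconv (Λ ρ) (Λ σp) (Λ σm) t a b ht haA hbB hΛρ⟩
  have hE0 : 0 ≤ E := le_csInf hEnonempty (fun x hx => hx.1)
  -- E ≤ (1+t)*sA + t*(1+b) for any b ∈ B
  have h1 : ∀ b ∈ B, E ≤ (1 + t) * sA + t * (1 + b) := by
    intro b hbB
    have hdiv : (E - t * (1 + b)) / (1 + t) ≤ sA := by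
      apply le_csInf hA
      intro a haA
      rw [div_le_iff₀ (by linarith : (0:ℝ) < 1 + t)]
      have := hstep a haA b hbB
      nlinarith
    rw [div_le_iff₀ (by linarith : (0:ℝ) < 1 + t)] at hdiv
    nlinarith
  -- E ≤ (1+t)*sA + t*(1+sB)
  have h2 : E ≤ (1 + t) * sA + t * (1 + sB) := by
    rcases eq_or_lt_of_le ht with htz | htpos
    · obtain ⟨b, hbB⟩ := hB
      have hh := h1 b hbB
      rw [← htz] at hh ⊢
      linarith
    · have hdiv : (E - (1 + t) * sA - t) / t ≤ sB := by
        apply le_csInf hB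
        intro b hbB
        rw [div_le_iff₀ htpos]
        have := h1 b hbB
        nlinarith
      rw [div_le_iff₀ htpos] at hdiv
      nlinarith
  -- translate to logs
  set m := max sA sB with hmdef
  have hm0 : 0 ≤ m := le_max_of_le_left hsA0
  have hkey : 1 + 2 * E ≤ (1 + 2 * t) * (1 + 2 * m) := by
    have hsAm : sA ≤ m := le_max_left _ _
    have hsBm : sB ≤ m := le_max_right _ _
    nlinarith
  have hELMρ : ELM M ρ = Real.logb 2 (1 + 2 * t) := by rw [ELM, hopt]
  have hELMΛρ : ELM M (Λ ρ) = Real.logb 2 (1 + 2 * E) := rfl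
  have hELMp : ELM M (Λ σp) = Real.logb 2 (1 + 2 * sA) := rfl
  have hELMm : ELM M (Λ σm) = Real.logb 2 (1 + 2 * sB) := rfl
  have hmaxlog : max (ELM M (Λ σp)) (ELM M (Λ σm)) = Real.logb 2 (1 + 2 * m) := by
    rw [hELMp, hELMm, hmdef]
    rcases max_cases sA sB with ⟨hmax, hle⟩ | ⟨hmax, hlt⟩
    · rw [hmax, max_eq_left]
      exact Real.logb_le_logb_of_le (by norm_num) (by linarith) (by linarith)
    · rw [hmax, max_eq_right]
      exact Real.logb_le_logb_of_le (by norm_num) (by linarith) (by linarith)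
  rw [hELMρ, hELMΛρ, hmaxlog, sub_le_iff_le_add]
  have hprod : Real.logb 2 (1 + 2 * t) + Real.logb 2 (1 + 2 * m)
      = Real.logb 2 ((1 + 2 * t) * (1 + 2 * m)) := by
    rw [Real.logb_mul (by linarith) (by linarith)]
  rw [add_comm (Real.logb 2 (1 + 2 * m)), hprod]
  exact Real.logb_le_logb_of_le (by norm_num) (by linarith) hkey
end
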